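/- Let a ∈ ℝ with a ≠ 0 and let z ∈ ℝ. Then logit(Φ(a·√c − z))/c converges to a·|a|/2 as c → ∞; that is, to a²/2 when a > 0 and to −a²/2 when a < 0. -/

import Mathlib

open Filter Set

/-- The standard normal cumulative distribution function. -/
noncomputable def Phi (x : ℝ) : ℝ :=
  (2 * Real.pi) ^ (-(1 : ℝ) / 2) * ∫ t in Set.Iic x, Real.exp (-t ^ 2 / 2)

/-- The logit function, `logit x = log x - log (1 - x)`. -/
noncomputable def logit (x : ℝ) : ℝ := Real.log x - Real.log (1 - x)

open MeasureTheory

lemma gauss_eq : (fun t : ℝ => Real.exp (-t ^ 2 / 2)) = fun t : ℝ => Real.exp (-(1/2 : ℝ) * t ^ 2) := by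
  funext t; ring_nf

lemma gauss_integrable : Integrable (fun t : ℝ => Real.exp (-t ^ 2 / 2)) := by
  rw [gauss_eq]; exact integrable_exp_neg_mul_sq (by norm_num)

lemma gauss_total : ∫ t : ℝ, Real.exp (-t ^ 2 / 2) = Real.sqrt (2 * Real.pi) := by
  rw [gauss_eq, integral_gaussian]
  rw [show Real.pi / (1/2:ℝ) = 2*Real.pi by ring]

lemma coef_eq : (2 * Real.pi) ^ (-(1 : ℝ) / 2) = (Real.sqrt (2 * Real.pi))⁻¹ := by
  have h : (0:ℝ) ≤ 2 * Real.pi := by positivity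
  rw [Real.sqrt_eq_rpow, ← Real.rpow_neg h]
  norm_num

lemma Iic_add_Ioi (x : ℝ) :
    (∫ t in Iic x, Real.exp (-t ^ 2 / 2)) + ∫ t in Ioi x, Real.exp (-t ^ 2 / 2)
      = Real.sqrt (2 * Real.pi) := by
  rw [intervalIntegral.integral_Iic_add_Ioi gauss_integrable.integrableOn gauss_integrable.integrableOn,
    gauss_total]

lemma one_sub_Phi (x : ℝ) :
    1 - Phi x = (Real.sqrt (2 * Real.pi))⁻¹ * ∫ t in Ioi x, Real.exp (-t ^ 2 / 2) := by
  have h2 : (0:ℝ) < Real.sqrt (2 * Real.pi) := Real.sqrt_pos.mpr (by positivity)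
  rw [Phi, coef_eq]
  have h3 : (Real.sqrt (2 * Real.pi))⁻¹ *
      ((∫ t in Iic x, Real.exp (-t ^ 2 / 2)) + ∫ t in Ioi x, Real.exp (-t ^ 2 / 2)) = 1 := by
    rw [Iic_add_Ioi x]; exact inv_mul_cancel₀ h2.ne'
  rw [mul_add] at h3
  linarith

lemma gauss_nonneg : ∀ t : ℝ, 0 ≤ Real.exp (-t ^ 2 / 2) := fun t => (Real.exp_pos _).le

lemma tail_upper {x : ℝ} (hx : 1 ≤ x) :
    ∫ t in Ioi x, Real.exp (-t ^ 2 / 2) ≤ Real.exp (-x ^ 2 / 2) := by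
  have hx0 : 0 < x := lt_of_lt_of_le one_pos hx
  have hint : IntegrableOn (fun t : ℝ => Real.exp (x ^ 2 / 2 - x * t)) (Ioi x) := by
    have h : IntegrableOn (fun t : ℝ => Real.exp (x ^ 2 / 2) * Real.exp (-(x * t))) (Ioi x) := by
      have h0 := (exp_neg_integrableOn_Ioi x hx0).const_mul (Real.exp (x ^ 2 / 2))
      simpa [IntegrableOn] using h0
    refine Integrable.congr h (Eventually.of_forall fun t => ?_)
    show Real.exp (x ^ 2 / 2) * Real.exp (-(x * t)) = Real.exp (x ^ 2 / 2 - x * t)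
    rw [← Real.exp_add]; ring_nf
  have h1 : ∫ t in Ioi x, Real.exp (-t ^ 2 / 2) ≤ ∫ t in Ioi x, Real.exp (x ^ 2 / 2 - x * t) := by
    refine setIntegral_mono_on gauss_integrable.integrableOn hint measurableSet_Ioi ?_
    intro t ht
    apply Real.exp_le_exp.mpr
    nlinarith [sq_nonneg (t - x), le_of_lt (Set.mem_Ioi.mp ht)]
  have h2 : ∫ t in Ioi x, Real.exp (x ^ 2 / 2 - x * t)
      = Real.exp (x ^ 2 / 2) * ∫ t in Ioi x, Real.exp (-(t * x)) := by
    rw [← integral_const_mul]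
    refine setIntegral_congr_fun measurableSet_Ioi (fun t _ => ?_)
    rw [← Real.exp_add]; congr 1; ring
  have h3 : ∫ t in Ioi x, Real.exp (-(t * x)) = x⁻¹ * Real.exp (-(x * x)) := by
    have := integral_comp_mul_right_Ioi (fun u : ℝ => Real.exp (-u)) x hx0
    simp only [smul_eq_mul] at this
    rw [this, integral_exp_neg_Ioi]
  calc ∫ t in Ioi x, Real.exp (-t ^ 2 / 2)
      ≤ Real.exp (x ^ 2 / 2) * (x⁻¹ * Real.exp (-(x * x))) := by rw [← h3, ← h2]; exact h1
    _ = x⁻¹ * Real.exp (-x ^ 2 / 2) := by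
        have he : Real.exp (x ^ 2 / 2) * Real.exp (-(x * x)) = Real.exp (-x ^ 2 / 2) := by
          rw [← Real.exp_add]; congr 1; ring
        rw [← he]; ring
    _ ≤ 1 * Real.exp (-x ^ 2 / 2) := by
        gcongr
        exact inv_le_one_of_one_le₀ hx
    _ = Real.exp (-x ^ 2 / 2) := one_mul _

lemma tail_lower {x : ℝ} (hx : 0 ≤ x) :
    Real.exp (-(x + 1) ^ 2 / 2) ≤ ∫ t in Ioi x, Real.exp (-t ^ 2 / 2) := by
  have h1 : Real.exp (-(x + 1) ^ 2 / 2) ≤ ∫ t in Ioc x (x + 1), Real.exp (-t ^ 2 / 2) := by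
    have hconst : ∫ (_ : ℝ) in Ioc x (x + 1), Real.exp (-(x + 1) ^ 2 / 2)
        = Real.exp (-(x + 1) ^ 2 / 2) := by
      rw [setIntegral_const, Real.volume_real_Ioc]
      simp
    rw [← hconst]
    refine setIntegral_mono_on ((integrableOn_const_iff).mpr ?_)
      (gauss_integrable.integrableOn) measurableSet_Ioc (fun t ht => ?_)
    · right; rw [Real.volume_Ioc]; exact ENNReal.ofReal_lt_top
    · apply Real.exp_le_exp.mpr
      have h2 := ht.1
      have h3 := ht.2
      nlinarith
  refine h1.trans (setIntegral_mono_set gauss_integrable.integrableOn ?_ ?_)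
  · exact Eventually.of_forall fun t => gauss_nonneg t
  · exact Eventually.of_forall (fun t ht => ht.1)

lemma Phi_le_one (x : ℝ) : Phi x ≤ 1 := by
  have h2 : (0:ℝ) < Real.sqrt (2 * Real.pi) := Real.sqrt_pos.mpr (by positivity)
  have h4 : 0 ≤ ∫ t in Ioi x, Real.exp (-t ^ 2 / 2) :=
    setIntegral_nonneg measurableSet_Ioi fun t _ => gauss_nonneg t
  have h5 := one_sub_Phi x
  nlinarith [inv_pos.mpr h2]

lemma Phi_lb {x : ℝ} (hx : 0 ≤ x) :
    (Real.sqrt (2 * Real.pi))⁻¹ * Real.exp (-(1:ℝ)/2) ≤ Phi x := by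
  have h2 : (0:ℝ) < Real.sqrt (2 * Real.pi) := Real.sqrt_pos.mpr (by positivity)
  rw [Phi, coef_eq]
  gcongr
  have h1 : Real.exp (-(1:ℝ)/2) ≤ ∫ t in Ioc (-1 : ℝ) 0, Real.exp (-t ^ 2 / 2) := by
    have hconst : ∫ (_ : ℝ) in Ioc (-1 : ℝ) 0, Real.exp (-(1:ℝ)/2)
        = Real.exp (-(1:ℝ)/2) := by
      rw [setIntegral_const, Real.volume_real_Ioc]
      simp
    rw [← hconst]
    refine setIntegral_mono_on ((integrableOn_const_iff).mpr ?_)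
      (gauss_integrable.integrableOn) measurableSet_Ioc (fun t ht => ?_)
    · right; rw [Real.volume_Ioc]; exact ENNReal.ofReal_lt_top
    · apply Real.exp_le_exp.mpr
      have h2 := ht.1
      have h3 := ht.2
      nlinarith
  refine h1.trans (setIntegral_mono_set gauss_integrable.integrableOn ?_ ?_)
  · exact Eventually.of_forall fun t => gauss_nonneg t
  · exact Eventually.of_forall (fun t ht => le_trans ht.2 hx)

lemma Phi_neg (x : ℝ) : Phi (-x) = 1 - Phi x := by
  rw [one_sub_Phi, Phi, coef_eq]
  congr 1
  have h1 : ∫ t in Iic (-x), Real.exp (-t ^ 2 / 2)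
      = ∫ t in Iic (-x), Real.exp (-(-t) ^ 2 / 2) := by
    refine setIntegral_congr_fun measurableSet_Iic fun t _ => ?_
    ring_nf
  rw [h1, integral_comp_neg_Iic (-x) (fun t => Real.exp (-t ^ 2 / 2)), neg_neg]

lemma logit_one_sub (p : ℝ) : logit (1 - p) = - logit p := by
  simp only [logit, sub_sub_cancel]
  ring

lemma tendsto_sqrt : Tendsto Real.sqrt atTop atTop := by
  refine tendsto_atTop_atTop.mpr fun b => ⟨b ^ 2, fun a ha => ?_⟩
  calc b ≤ |b| := le_abs_self b
    _ = Real.sqrt (b ^ 2) := (Real.sqrt_sq_eq_abs b).symm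
    _ ≤ Real.sqrt a := Real.sqrt_le_sqrt ha

lemma lim_sq (a w : ℝ) :
    Tendsto (fun c : ℝ => (a * Real.sqrt c - w) ^ 2 / c) atTop (nhds (a ^ 2)) := by
  have h0 : Tendsto (fun c : ℝ => w / Real.sqrt c) atTop (nhds 0) :=
    Tendsto.div_atTop tendsto_const_nhds tendsto_sqrt
  have h1 : Tendsto (fun c : ℝ => a - w / Real.sqrt c) atTop (nhds a) := by
    simpa using tendsto_const_nhds.sub h0
  have h2 : Tendsto (fun c : ℝ => (a - w / Real.sqrt c) ^ 2) atTop (nhds (a ^ 2)) := h1.pow 2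
  refine h2.congr' ?_
  filter_upwards [eventually_gt_atTop (0:ℝ)] with c hc
  have hs : 0 < Real.sqrt c := Real.sqrt_pos.mpr hc
  have hss : Real.sqrt c * Real.sqrt c = c := Real.mul_self_sqrt hc.le
  have h3 : (a - w / Real.sqrt c) * Real.sqrt c = a * Real.sqrt c - w := by
    field_simp
  have key : (a - w / Real.sqrt c) ^ 2 * c = (a * Real.sqrt c - w) ^ 2 := by
    calc (a - w / Real.sqrt c) ^ 2 * c
        = ((a - w / Real.sqrt c) * Real.sqrt c) ^ 2 := by rw [mul_pow, Real.sq_sqrt hc.le]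
      _ = (a * Real.sqrt c - w) ^ 2 := by rw [h3]
  rw [← key]
  field_simp

lemma main_pos (a z : ℝ) (ha : 0 < a) :
    Tendsto (fun c : ℝ => logit (Phi (a * Real.sqrt c - z)) / c)
      atTop (nhds (a ^ 2 / 2)) := by
  have h2 : (0:ℝ) < Real.sqrt (2 * Real.pi) := Real.sqrt_pos.mpr (by positivity)
  set K : ℝ := (Real.sqrt (2 * Real.pi))⁻¹ with hK
  have hKpos : 0 < K := inv_pos.mpr h2
  have hx : Tendsto (fun c : ℝ => a * Real.sqrt c - z) atTop atTop := by
    have h0 := Tendsto.const_mul_atTop ha tendsto_sqrt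
    simpa [sub_eq_add_neg] using tendsto_atTop_add_const_right atTop (-z) h0
  have hev : ∀ᶠ c : ℝ in atTop, 1 ≤ a * Real.sqrt c - z := hx.eventually_ge_atTop 1
  have T1 : Tendsto (fun c : ℝ => Real.log (Phi (a * Real.sqrt c - z)) / c)
      atTop (nhds 0) := by
    have hlow : Tendsto (fun c : ℝ => Real.log (K * Real.exp (-(1:ℝ)/2)) / c)
        atTop (nhds 0) := Tendsto.div_atTop tendsto_const_nhds tendsto_id
    refine tendsto_of_tendsto_of_tendsto_of_le_of_le' hlow
      (tendsto_const_nhds : Tendsto (fun _ : ℝ => (0:ℝ)) atTop (nhds 0)) ?_ ?_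
    · filter_upwards [hev, eventually_gt_atTop (0:ℝ)] with c h1 hc
      have hx0 : (0:ℝ) ≤ a * Real.sqrt c - z := le_trans zero_le_one h1
      have hb := Phi_lb hx0
      have hlog : Real.log (K * Real.exp (-(1:ℝ)/2)) ≤ Real.log (Phi (a * Real.sqrt c - z)) :=
        Real.log_le_log (by positivity) hb
      gcongr
    · filter_upwards [hev, eventually_gt_atTop (0:ℝ)] with c h1 hc
      have hub := Phi_le_one (a * Real.sqrt c - z)
      have hlb : 0 < Phi (a * Real.sqrt c - z) :=
        lt_of_lt_of_le (by positivity) (Phi_lb (le_trans zero_le_one h1))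
      have hlog : Real.log (Phi (a * Real.sqrt c - z)) ≤ 0 := Real.log_nonpos hlb.le hub
      exact div_nonpos_of_nonpos_of_nonneg hlog hc.le
  have T2 : Tendsto (fun c : ℝ => Real.log (1 - Phi (a * Real.sqrt c - z)) / c)
      atTop (nhds (-(a ^ 2) / 2)) := by
    have hA : Tendsto (fun c : ℝ => Real.log K / c) atTop (nhds 0) :=
      Tendsto.div_atTop tendsto_const_nhds tendsto_id
    have llow : Tendsto (fun c : ℝ => (Real.log K - (a * Real.sqrt c - (z - 1)) ^ 2 / 2) / c)
        atTop (nhds (-(a ^ 2) / 2)) := by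
      have hB := (lim_sq a (z - 1)).div_const 2
      have hC := hA.sub hB
      have hfun : ∀ c : ℝ, Real.log K / c - (a * Real.sqrt c - (z - 1)) ^ 2 / c / 2
          = (Real.log K - (a * Real.sqrt c - (z - 1)) ^ 2 / 2) / c := by
        intro c
        rw [sub_div, div_div, div_div, mul_comm (2:ℝ) c]
      have := hC.congr hfun
      convert this using 2
      ring
    have lup : Tendsto (fun c : ℝ => (Real.log K - (a * Real.sqrt c - z) ^ 2 / 2) / c)
        atTop (nhds (-(a ^ 2) / 2)) := by
      have hB := (lim_sq a z).div_const 2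
      have hC := hA.sub hB
      have hfun : ∀ c : ℝ, Real.log K / c - (a * Real.sqrt c - z) ^ 2 / c / 2
          = (Real.log K - (a * Real.sqrt c - z) ^ 2 / 2) / c := by
        intro c
        rw [sub_div, div_div, div_div, mul_comm (2:ℝ) c]
      have := hC.congr hfun
      convert this using 2
      ring
    refine tendsto_of_tendsto_of_tendsto_of_le_of_le' llow lup ?_ ?_
    · filter_upwards [hev, eventually_gt_atTop (0:ℝ)] with c h1 hc
      set x := a * Real.sqrt c - z with hxdef
      have hx0 : (0:ℝ) ≤ x := le_trans zero_le_one h1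
      have hlb : K * Real.exp (-(x + 1) ^ 2 / 2) ≤ 1 - Phi x := by
        rw [one_sub_Phi]
        exact mul_le_mul_of_nonneg_left (tail_lower hx0) hKpos.le
      have hlog : Real.log (K * Real.exp (-(x + 1) ^ 2 / 2)) ≤ Real.log (1 - Phi x) :=
        Real.log_le_log (by positivity) hlb
      rw [Real.log_mul hKpos.ne' (Real.exp_pos _).ne', Real.log_exp] at hlog
      have heq : x + 1 = a * Real.sqrt c - (z - 1) := by rw [hxdef]; ring
      rw [heq] at hlog
      gcongr (?_ / c)
      linarith
    · filter_upwards [hev, eventually_gt_atTop (0:ℝ)] with c h1 hc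
      set x := a * Real.sqrt c - z with hxdef
      have hx0 : (0:ℝ) ≤ x := le_trans zero_le_one h1
      have hpos : 0 < 1 - Phi x := by
        have hlb : K * Real.exp (-(x + 1) ^ 2 / 2) ≤ 1 - Phi x := by
          rw [one_sub_Phi]
          exact mul_le_mul_of_nonneg_left (tail_lower hx0) hKpos.le
        exact lt_of_lt_of_le (by positivity) hlb
      have hub : 1 - Phi x ≤ K * Real.exp (-x ^ 2 / 2) := by
        rw [one_sub_Phi]
        exact mul_le_mul_of_nonneg_left (tail_upper h1) hKpos.le
      have hlog : Real.log (1 - Phi x) ≤ Real.log (K * Real.exp (-x ^ 2 / 2)) :=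
        Real.log_le_log hpos hub
      rw [Real.log_mul hKpos.ne' (Real.exp_pos _).ne', Real.log_exp] at hlog
      gcongr (?_ / c)
      linarith
  have hfinal := T1.sub T2
  have hconst : (0:ℝ) - -(a ^ 2) / 2 = a ^ 2 / 2 := by ring
  rw [hconst] at hfinal
  refine hfinal.congr fun c => ?_
  rw [logit, sub_div]

theorem logit_proxy_asymptotically_linear
    (a z : ℝ) (ha : a ≠ 0) :
    Tendsto (fun c : ℝ => logit (Phi (a * Real.sqrt c - z)) / c)
      atTop (nhds (a * |a| / 2)) := by
  rcases ha.lt_or_gt with hneg | hpos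
  · have hb : 0 < -a := neg_pos.mpr hneg
    have h := (main_pos (-a) (-z) hb).neg
    have hconst : -((-a) ^ 2 / 2) = a * |a| / 2 := by
      rw [abs_of_neg hneg]; ring
    rw [hconst] at h
    refine h.congr fun c => ?_
    have heq : -a * Real.sqrt c - -z = -(a * Real.sqrt c - z) := by ring
    rw [heq, Phi_neg, logit_one_sub, neg_div, neg_neg]
  · have h := main_pos a z hpos
    have hconst : a ^ 2 / 2 = a * |a| / 2 := by
      rw [abs_of_pos hpos]; ring
    rw [hconst] at h
    exact h
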